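/- For the Lagrangian stationarity condition of the computation resource problem: if α > 0, x = 1, c > 0, θ ≥ 0, ψ > 0, ϱ = ω = 0, and 1 + β − c/f − Λ > 0, then the equation (α c)/(f² ln 2 · (1+β − c/f − Λ)) + θ c/f² = ψ has at most one solution f in the interval (c/(1+β−Λ), ∞). -/

import Mathlib

/-!
On `(c/a, ∞)` the denominator `f² · log 2 · (a - c/f)` is positive and strictly increasing, so the
first term of the left-hand side is strictly decreasing, while `θc/f²` is antitone. The left-hand side
is therefore strictly decreasing on that interval and takes the value `ψ` at most once.
-/

open Set

lemma sub_div_pos_of_div_lt {a c f : ℝ} (ha : 0 < a) (hf₀ : 0 < f) (hf : c / a < f) :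
    0 < a - c / f := by
  rw [sub_pos, div_lt_iff₀ hf₀, mul_comm]
  exact (div_lt_iff₀ ha).mp hf

lemma StrictMonoOn.const_div_of_pos {s : Set ℝ} {g : ℝ → ℝ} {K : ℝ} (hg : StrictMonoOn g s)
    (hK : 0 < K) (hg₀ : ∀ x ∈ s, 0 < g x) : StrictAntiOn (fun x => K / g x) s :=
  fun _ hx _ hy hxy => div_lt_div_of_pos_left hK (hg₀ _ hx) (hg hx hy hxy)

lemma antitoneOn_div_sq {K : ℝ} (hK : 0 ≤ K) : AntitoneOn (fun x : ℝ => K / x ^ 2) (Ioi 0) :=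
  fun x (hx : 0 < x) _ _ hxy => by
    dsimp only
    gcongr

lemma sq_mul_mul_sub_div_pos {a c L f : ℝ} (ha : 0 < a) (hc : 0 < c) (hL : 0 < L)
    (hf : c / a < f) : 0 < f ^ 2 * L * (a - c / f) := by
  have hf₀ : 0 < f := (div_pos hc ha).trans hf
  have := sub_div_pos_of_div_lt ha hf₀ hf
  positivity

lemma strictMonoOn_sq_mul_mul_sub_div {a c L : ℝ} (ha : 0 < a) (hc : 0 < c) (hL : 0 < L) :
    StrictMonoOn (fun f => f ^ 2 * L * (a - c / f)) (Ioi (c / a)) := by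
  intro x hx y _ hxy
  have hx₀ : 0 < x := (div_pos hc ha).trans hx
  have := sub_div_pos_of_div_lt ha hx₀ hx
  dsimp only
  gcongr

lemma strictAntiOn_stationarity_lhs {α c θ a : ℝ} (hα : 0 < α) (hc : 0 < c) (hθ : 0 ≤ θ)
    (ha : 0 < a) :
    StrictAntiOn (fun f => α * c / (f ^ 2 * Real.log 2 * (a - c / f)) + θ * c / f ^ 2)
      (Ioi (c / a)) := by
  have hlog : 0 < Real.log 2 := Real.log_pos one_lt_two
  refine StrictAntiOn.add_antitone ?_ ((antitoneOn_div_sq (by positivity)).mono ?_)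
  · exact (strictMonoOn_sq_mul_mul_sub_div ha hc hlog).const_div_of_pos (by positivity)
      fun _ hf => sq_mul_mul_sub_div_pos ha hc hlog hf
  · exact Ioi_subset_Ioi (div_pos hc ha).le

theorem stmt10_general (α β c Λ θ ψ : ℝ) (hα : 0 < α) (hc : 0 < c)
    (hθ : 0 ≤ θ) (hβΛ : 0 < 1 + β - Λ) :
    ∀ f₁ f₂ : ℝ, f₁ ∈ Set.Ioi (c / (1 + β - Λ)) → f₂ ∈ Set.Ioi (c / (1 + β - Λ)) →
      (α * c) / (f₁ ^ 2 * Real.log 2 * (1 + β - c / f₁ - Λ)) + θ * c / f₁ ^ 2 = ψ →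
      (α * c) / (f₂ ^ 2 * Real.log 2 * (1 + β - c / f₂ - Λ)) + θ * c / f₂ ^ 2 = ψ →
      f₁ = f₂ := by
  intro f₁ f₂ h₁ h₂ e₁ e₂
  have regroup : ∀ f : ℝ, 1 + β - c / f - Λ = (1 + β - Λ) - c / f := fun f => by ring
  rw [regroup] at e₁ e₂
  exact (strictAntiOn_stationarity_lhs hα hc hθ hβΛ).injOn h₁ h₂ (e₁.trans e₂.symm)

/-- the stationarity equation (αc)/(f² ln 2·(1+β−c/f−Λ)) + θc/f² = ψ
has at most one solution f on (c/(1+β−Λ), ∞), when α > 0, x = 1, c > 0, θ ≥ 0,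
ψ > 0, ϱ = ω = 0. -/
theorem stmt10 (α β c Λ θ ψ x ϱ ω : ℝ) (hα : 0 < α) (hx : x = 1) (hc : 0 < c)
    (hθ : 0 ≤ θ) (hψ : 0 < ψ) (hϱ : ϱ = 0) (hω : ω = 0) (hβΛ : 0 < 1 + β - Λ) :
    ∀ f₁ f₂ : ℝ, f₁ ∈ Set.Ioi (c / (1 + β - Λ)) → f₂ ∈ Set.Ioi (c / (1 + β - Λ)) →
      (α * c) / (f₁ ^ 2 * Real.log 2 * (1 + β - c / f₁ - Λ)) + θ * c / f₁ ^ 2 = ψ →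
      (α * c) / (f₂ ^ 2 * Real.log 2 * (1 + β - c / f₂ - Λ)) + θ * c / f₂ ^ 2 = ψ →
      f₁ = f₂ :=
  stmt10_general α β c Λ θ ψ hα hc hθ hβΛ
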